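/- Let (X, f_{1,∞}) be a periodic non-autonomous system on a compact Hausdorff uniform space (X, 𝒰) whose induced autonomous map g has a transitive point. Then (X, f_{1,∞}) is thickly sensitive if and only if it is multi-sensitive. -/

import Mathlib

open Topology Filter Set
open scoped Uniformity

/-- `traj f n = f_n ∘ ⋯ ∘ f_1` (and `traj f 0 = id`), i.e. `f_1^n`. -/
def traj {X : Type*} (f : ℕ → X → X) : ℕ → X → X
  | 0 => id
  | n + 1 => f (n + 1) ∘ traj f n

/-- The family `f` is periodic with period `p`. -/
def PeriodicFam {X : Type*} (f : ℕ → X → X) (p : ℕ) : Prop :=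
  ∀ n, f (n + p) = f n

/-- A set of naturals is thick: it contains arbitrarily long blocks of consecutive integers. -/
def Thick (T : Set ℕ) : Prop :=
  ∀ k : ℕ, ∃ n : ℕ, ∀ i ≤ k, n + i ∈ T

/-- A set of naturals is syndetic: it has bounded gaps. -/
def Syndetic (S : Set ℕ) : Prop :=
  ∃ M : ℕ, ∀ n : ℕ, ∃ m ∈ S, n ≤ m ∧ m ≤ n + M

/-- `x` is a transitive point of the non-autonomous system `(X, f_{1,∞})`. -/
def TransPt {X : Type*} [TopologicalSpace X] (f : ℕ → X → X) (x : X) : Prop :=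
  Dense (Set.range fun n => traj f n x)

/-- `x` is a transitive point of the autonomous system `(X, g)`. -/
def TransPtAut {X : Type*} [TopologicalSpace X] (g : X → X) (x : X) : Prop :=
  Dense (Set.range fun n => g^[n] x)

/-- `x` is an equicontinuity point of `(X, f_{1,∞})` on a uniform space. -/
def EqPt {X : Type*} [UniformSpace X] (f : ℕ → X → X) (x : X) : Prop :=
  ∀ E ∈ 𝓤 X, ∃ D ∈ 𝓤 X, ∀ y : X, (x, y) ∈ D → ∀ n : ℕ, (traj f n x, traj f n y) ∈ E

/-- `x` is a syndetically equicontinuous point of `(X, f_{1,∞})`. -/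
def SynEqPt {X : Type*} [UniformSpace X] (f : ℕ → X → X) (x : X) : Prop :=
  ∀ E ∈ 𝓤 X, ∃ U ∈ 𝓝 x,
    Syndetic {n : ℕ | ∀ x₁ ∈ U, ∀ x₂ ∈ U, (traj f n x₁, traj f n x₂) ∈ E}

/-- `x` is a syndetically equicontinuous point of the autonomous system `(X, g)`. -/
def SynEqPtAut {X : Type*} [UniformSpace X] (g : X → X) (x : X) : Prop :=
  ∀ E ∈ 𝓤 X, ∃ U ∈ 𝓝 x,
    Syndetic {n : ℕ | ∀ x₁ ∈ U, ∀ x₂ ∈ U, (g^[n] x₁, g^[n] x₂) ∈ E}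

/-- `N(U, D)` for the non-autonomous system. -/
def NSet {X : Type*} (f : ℕ → X → X) (U : Set X) (D : Set (X × X)) : Set ℕ :=
  {n : ℕ | 0 < n ∧ ∃ x ∈ U, ∃ y ∈ U, (traj f n x, traj f n y) ∉ D}

/-- `N(U, D)` for the autonomous system. -/
def NSetAut {X : Type*} (g : X → X) (U : Set X) (D : Set (X × X)) : Set ℕ :=
  {n : ℕ | 0 < n ∧ ∃ x ∈ U, ∃ y ∈ U, (g^[n] x, g^[n] y) ∉ D}

/-- Sensitivity of `(X, f_{1,∞})`. -/
def Sensitive {X : Type*} [UniformSpace X] (f : ℕ → X → X) : Prop :=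
  ∃ D ∈ 𝓤 X, ∀ U : Set X, IsOpen U → U.Nonempty → (NSet f U D).Nonempty

/-- Thick sensitivity of `(X, f_{1,∞})`. -/
def ThickSensitive {X : Type*} [UniformSpace X] (f : ℕ → X → X) : Prop :=
  ∃ D ∈ 𝓤 X, ∀ U : Set X, IsOpen U → U.Nonempty → Thick (NSet f U D)

/-- Thick sensitivity of the autonomous system `(X, g)`. -/
def ThickSensitiveAut {X : Type*} [UniformSpace X] (g : X → X) : Prop :=
  ∃ D ∈ 𝓤 X, ∀ U : Set X, IsOpen U → U.Nonempty → Thick (NSetAut g U D)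

/-- Multi-sensitivity of `(X, f_{1,∞})`. -/
def MultiSensitive {X : Type*} [UniformSpace X] (f : ℕ → X → X) : Prop :=
  ∃ D ∈ 𝓤 X, ∀ (k : ℕ) (U : Fin (k + 1) → Set X),
    (∀ i, IsOpen (U i)) → (∀ i, (U i).Nonempty) → (⋂ i, NSet f (U i) D).Nonempty

/-- Multi-sensitivity of the autonomous system `(X, g)`. -/
def MultiSensitiveAut {X : Type*} [UniformSpace X] (g : X → X) : Prop :=
  ∃ D ∈ 𝓤 X, ∀ (k : ℕ) (U : Fin (k + 1) → Set X),
    (∀ i, IsOpen (U i)) → (∀ i, (U i).Nonempty) → (⋂ i, NSetAut g (U i) D).Nonempty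

/-- Eventual sensitivity of `(X, f_{1,∞})` with a given entourage `D`. -/
def EvSensitiveWith {X : Type*} [UniformSpace X] (f : ℕ → X → X) (D : Set (X × X)) : Prop :=
  ∀ x : X, ∀ E ∈ 𝓤 X, ∃ n k : ℕ, 0 < n ∧ 0 < k ∧
    ∃ y : X, (traj f n x, y) ∈ E ∧ (traj f (n + k) x, traj f k y) ∉ D

/-- Eventual sensitivity of `(X, f_{1,∞})`. -/
def EvSensitive {X : Type*} [UniformSpace X] (f : ℕ → X → X) : Prop :=
  ∃ D ∈ 𝓤 X, EvSensitiveWith f D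

/-- Eventual sensitivity of the autonomous system `(X, g)` with entourage `D`. -/
def EvSensitiveAutWith {X : Type*} [UniformSpace X] (g : X → X) (D : Set (X × X)) : Prop :=
  ∀ x : X, ∀ E ∈ 𝓤 X, ∃ q k : ℕ, 0 < q ∧ 0 < k ∧
    ∃ y : X, (g^[q] x, y) ∈ E ∧ (g^[q + k] x, g^[k] y) ∉ D

/-- `(x, y)` is a (topological) equicontinuity pair for `(X, f_{1,∞})`. -/
def EqPair {X : Type*} [TopologicalSpace X] (f : ℕ → X → X) (x y : X) : Prop :=
  ∀ O ∈ 𝓝 y, ∃ U ∈ 𝓝 x, ∃ V ∈ 𝓝 y, ∀ n : ℕ, 0 < n →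
    ((traj f n '' U) ∩ V).Nonempty → traj f n '' U ⊆ O

/-- `(x, y)` is a syndetic equicontinuity pair for `(X, f_{1,∞})`. -/
def SynEqPair {X : Type*} [TopologicalSpace X] (f : ℕ → X → X) (x y : X) : Prop :=
  ∀ O ∈ 𝓝 y, ∃ U ∈ 𝓝 x, ∃ V ∈ 𝓝 y,
    Syndetic {n : ℕ | ((traj f n '' U) ∩ V).Nonempty → traj f n '' U ⊆ O}

/-- `O` is a splitting neighborhood of `y` with respect to `x`. -/
def SplittingNbhd {X : Type*} [TopologicalSpace X] (f : ℕ → X → X) (x y : X) (O : Set X) :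
    Prop :=
  O ∈ 𝓝 y ∧ ∀ U ∈ 𝓝 x, ∀ V ∈ 𝓝 y, ∃ n : ℕ, 0 < n ∧
    ((traj f n '' U) ∩ V).Nonempty ∧ ¬ traj f n '' U ⊆ O

/-- A finite open cover of `X`. -/
def IsFinOpenCover {X : Type*} [TopologicalSpace X] (𝒰 : Finset (Set X)) : Prop :=
  (∀ U ∈ 𝒰, IsOpen U) ∧ ⋃₀ (↑𝒰 : Set (Set X)) = Set.univ

/-- `N(V, 𝒰)`: times at which `f_1^n(V)` is not contained in any single member of `𝒰`. -/
def HNSet {X : Type*} (f : ℕ → X → X) (V : Set X) (𝒰 : Finset (Set X)) : Set ℕ :=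
  {n : ℕ | 0 < n ∧ ∀ U ∈ 𝒰, ¬ traj f n '' V ⊆ U}

/-- `N(V, 𝒰)` for the autonomous system. -/
def HNSetAut {X : Type*} (g : X → X) (V : Set X) (𝒰 : Finset (Set X)) : Set ℕ :=
  {n : ℕ | 0 < n ∧ ∀ U ∈ 𝒰, ¬ g^[n] '' V ⊆ U}

/-- Hausdorff sensitivity of `(X, f_{1,∞})`. -/
def HSensitive {X : Type*} [TopologicalSpace X] (f : ℕ → X → X) : Prop :=
  ∃ 𝒰 : Finset (Set X), IsFinOpenCover 𝒰 ∧
    ∀ V : Set X, IsOpen V → V.Nonempty → (HNSet f V 𝒰).Nonempty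

/-- Hausdorff sensitivity of the autonomous system `(X, g)`. -/
def HSensitiveAut {X : Type*} [TopologicalSpace X] (g : X → X) : Prop :=
  ∃ 𝒰 : Finset (Set X), IsFinOpenCover 𝒰 ∧
    ∀ V : Set X, IsOpen V → V.Nonempty → (HNSetAut g V 𝒰).Nonempty

/-- Thick Hausdorff sensitivity of `(X, f_{1,∞})`. -/
def ThickHSensitive {X : Type*} [TopologicalSpace X] (f : ℕ → X → X) : Prop :=
  ∃ 𝒰 : Finset (Set X), IsFinOpenCover 𝒰 ∧
    ∀ V : Set X, IsOpen V → V.Nonempty → Thick (HNSet f V 𝒰)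

/-- Thick Hausdorff sensitivity of the autonomous system `(X, g)`. -/
def ThickHSensitiveAut {X : Type*} [TopologicalSpace X] (g : X → X) : Prop :=
  ∃ 𝒰 : Finset (Set X), IsFinOpenCover 𝒰 ∧
    ∀ V : Set X, IsOpen V → V.Nonempty → Thick (HNSetAut g V 𝒰)

/-- Multi-Hausdorff sensitivity of the autonomous system `(X, g)`. -/
def MultiHSensitiveAut {X : Type*} [TopologicalSpace X] (g : X → X) : Prop :=
  ∃ 𝒰 : Finset (Set X), IsFinOpenCover 𝒰 ∧
    ∀ (m : ℕ) (V : Fin (m + 1) → Set X),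
      (∀ i, IsOpen (V i)) → (∀ i, (V i).Nonempty) → (⋂ i, HNSetAut g (V i) 𝒰).Nonempty

/-!
Write `g = f_p ∘ ⋯ ∘ f_1`; periodicity gives `f_1^(n + a p) = f_1^n ∘ g^a`, so separation at time
`n + a p` of two points of `g^{-a} U` is separation at time `n` of two points of `U`.

Thick ⇒ multi: the transitive point lies in `W = ⋂ g^{-m_i} U_i` for suitable `m_i`, and a block
of `N(W, D)` of length `max m_i · p` starting at `n` puts `n` into every `N(U_i, D)`.

Multi ⇒ thick: a transitive point of `g` on a space without isolated points forces `g` to be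
onto, so all `g^{-i} U` are nonempty open sets. A time `n > k p` common to `N(g^{-i} U, D)`,
`i ≤ k`, puts every `t ∈ [n - k p, n - k p + k]` into `N(U, D')`: write `n = t + r + i p` with
`r < p`, and choose `D'` so that the finitely many maps `f_{s+r} ∘ ⋯ ∘ f_{s+1}` (`s, r < p`) send
`D'`-close points to `D`-close points.
-/

open Function

section Trajectory

variable {X : Type*} {f : ℕ → X → X} {p : ℕ}

theorem continuous_traj [TopologicalSpace X] (hf : ∀ n, Continuous (f n)) :
    ∀ n, Continuous (traj f n)
  | 0 => continuous_id
  | n + 1 => (hf (n + 1)).comp (continuous_traj hf n)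

theorem traj_add (f : ℕ → X → X) (m : ℕ) :
    ∀ n, traj f (m + n) = traj (fun i => f (m + i)) n ∘ traj f m
  | 0 => rfl
  | n + 1 => by
    change f (m + n + 1) ∘ traj f (m + n) = (f (m + (n + 1)) ∘ _) ∘ traj f m
    rw [traj_add f m n]
    rfl

theorem PeriodicFam.shift_mod (hper : PeriodicFam f p) (m : ℕ) :
    (fun i => f (m + i)) = fun i => f (m % p + i) := by
  funext i
  conv_lhs => rw [← Nat.mod_add_div m p, add_right_comm, mul_comm]
  exact Periodic.nat_mul (hper : Periodic f p) (m / p) _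

theorem PeriodicFam.shift_mul (hper : PeriodicFam f p) (a : ℕ) :
    (fun i => f (a * p + i)) = f := by
  funext i
  rw [add_comm]
  exact Periodic.nat_mul (hper : Periodic f p) a i

theorem PeriodicFam.traj_mul (hper : PeriodicFam f p) : ∀ a, traj f (a * p) = (traj f p)^[a]
  | 0 => by rw [zero_mul]; rfl
  | a + 1 => by
    rw [add_mul, one_mul, traj_add, hper.shift_mul, hper.traj_mul a, iterate_succ']

theorem PeriodicFam.traj_add_mul (hper : PeriodicFam f p) (n a : ℕ) :
    traj f (n + a * p) = traj f n ∘ (traj f p)^[a] := by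
  rw [add_comm, traj_add, hper.shift_mul, hper.traj_mul]

end Trajectory

section NSet

variable {X : Type*} {f : ℕ → X → X} {p : ℕ} {U V : Set X} {D D' : Set (X × X)} {n t : ℕ}

theorem NSet_mono (hUV : U ⊆ V) : NSet f U D ⊆ NSet f V D :=
  fun _ ⟨hn, x, hx, y, hy, hxy⟩ => ⟨hn, x, hUV hx, y, hUV hy, hxy⟩

theorem PeriodicFam.mem_NSet_of_add_mul_mem (hper : PeriodicFam f p) {a : ℕ} (hn : 0 < n)
    (h : n + a * p ∈ NSet f ((traj f p)^[a] ⁻¹' U) D) : n ∈ NSet f U D := by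
  obtain ⟨-, x, hx, y, hy, hxy⟩ := h
  rw [hper.traj_add_mul] at hxy
  exact ⟨hn, _, hx, _, hy, hxy⟩

theorem mem_NSet_of_add_mem {r : ℕ}
    (hD' : ∀ u v, (u, v) ∈ D' →
      (traj (fun i => f (t + i)) r u, traj (fun i => f (t + i)) r v) ∈ D)
    (ht : 0 < t) (h : t + r ∈ NSet f U D) : t ∈ NSet f U D' := by
  obtain ⟨-, x, hx, y, hy, hxy⟩ := h
  rw [traj_add] at hxy
  exact ⟨ht, x, hx, y, hy, fun h => hxy (hD' _ _ h)⟩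

theorem PeriodicFam.mem_NSet_of_mem_NSet_iterate_preimage (hper : PeriodicFam f p) (hp : 0 < p)
    (hD' : ∀ uv ∈ D', ∀ t, ∀ r < p,
      (traj (fun i => f (t + i)) r uv.1, traj (fun i => f (t + i)) r uv.2) ∈ D)
    (ht : 0 < t) (htn : t ≤ n) (h : n ∈ NSet f ((traj f p)^[(n - t) / p] ⁻¹' U) D) :
    t ∈ NSet f U D' := by
  have hdiv := Nat.div_add_mod' (n - t) p
  set q := (n - t) / p
  set r := (n - t) % p
  have hn : n = t + r + q * p := by omega
  rw [hn] at h
  have hr : r < p := Nat.mod_lt _ hp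
  exact mem_NSet_of_add_mem (fun u v huv => hD' (u, v) huv t r hr) ht
    (hper.mem_NSet_of_add_mul_mem (by omega) h)

end NSet

section Uniform

variable {X : Type*} [UniformSpace X] {f : ℕ → X → X} {D : Set (X × X)}

theorem PeriodicFam.eventually_uniformity_traj_shift [CompactSpace X] {p : ℕ}
    (hf : ∀ n, Continuous (f n)) (hp : 0 < p) (hper : PeriodicFam f p) (hD : D ∈ 𝓤 X) :
    ∀ᶠ uv in 𝓤 X, ∀ t, ∀ r < p,
      (traj (fun i => f (t + i)) r uv.1, traj (fun i => f (t + i)) r uv.2) ∈ D := by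
  have hequi : UniformEquicontinuous fun q : Fin p × Fin p => traj (fun i => f (q.1 + i)) q.2 :=
    uniformEquicontinuous_finite.mpr fun q =>
      CompactSpace.uniformContinuous_of_continuous (continuous_traj (fun _ => hf _) _)
  filter_upwards [hequi D hD] with uv huv t r hr
  rw [hper.shift_mod t]
  exact huv (⟨t % p, Nat.mod_lt t hp⟩, ⟨r, hr⟩)

theorem exists_isOpen_forall_traj_mem (hf : ∀ n, Continuous (f n)) (hD : D ∈ 𝓤 X) (N : ℕ)
    (z : X) : ∃ V, IsOpen V ∧ z ∈ V ∧ ∀ u ∈ V, ∀ v ∈ V, ∀ j ≤ N, (traj f j u, traj f j v) ∈ D := by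
  have hequi : EquicontinuousAt (fun j : Fin (N + 1) => traj f j) z :=
    equicontinuousAt_finite.mpr fun j => (continuous_traj hf j).continuousAt
  obtain ⟨W, hW, hWD⟩ := equicontinuousAt_iff_pair.mp hequi D hD
  obtain ⟨V, hVW, hVo, hzV⟩ := mem_nhds_iff.mp hW
  exact ⟨V, hVo, hzV, fun u hu v hv j hj => hWD u (hVW hu) v (hVW hv) ⟨j, by omega⟩⟩

theorem exists_lt_mem_iInter_NSet (hf : ∀ n, Continuous (f n)) (hD : D ∈ 𝓤 X)
    (hM : ∀ (k : ℕ) (U : Fin (k + 1) → Set X),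
      (∀ i, IsOpen (U i)) → (∀ i, (U i).Nonempty) → (⋂ i, NSet f (U i) D).Nonempty)
    (N : ℕ) {k : ℕ} (U : Fin (k + 1) → Set X) (hUo : ∀ i, IsOpen (U i))
    (hUne : ∀ i, (U i).Nonempty) : ∃ n, N < n ∧ n ∈ ⋂ i, NSet f (U i) D := by
  obtain ⟨z, -⟩ := hUne 0
  obtain ⟨V, hVo, hzV, hV⟩ := exists_isOpen_forall_traj_mem hf hD N z
  obtain ⟨n, hn⟩ := hM (k + 1) (Fin.cons V U) (Fin.forall_fin_succ.mpr ⟨hVo, hUo⟩)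
    (Fin.forall_fin_succ.mpr ⟨⟨z, hzV⟩, hUne⟩)
  obtain ⟨⟨-, u, hu, v, hv, huv⟩, hnU⟩ := Fin.forall_fin_succ.mp (mem_iInter.mp hn)
  refine ⟨n, ?_, mem_iInter.mpr hnU⟩
  by_contra hle
  exact huv (hV u hu v hv n (not_lt.mp hle))

end Uniform

section Sensitivity

variable {X : Type*} {f : ℕ → X → X} {p : ℕ} {x : X}

theorem MultiSensitive.sensitive [UniformSpace X] (h : MultiSensitive f) : Sensitive f := by
  obtain ⟨D, hD, hM⟩ := h
  refine ⟨D, hD, fun U hUo hUne => ?_⟩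
  obtain ⟨n, hn⟩ := hM 0 (fun _ => U) (fun _ => hUo) (fun _ => hUne)
  exact ⟨n, mem_iInter.mp hn 0⟩

theorem Sensitive.not_isOpen_singleton [UniformSpace X] (h : Sensitive f) (x : X) :
    ¬ IsOpen {x} := by
  intro hx
  obtain ⟨D, hD, hN⟩ := h
  obtain ⟨n, -, _, rfl, _, rfl, hsep⟩ := hN {x} hx (singleton_nonempty x)
  exact hsep (refl_mem_uniformity hD)

theorem TransPtAut.exists_iterate_mem [TopologicalSpace X] {g : X → X} (hx : TransPtAut g x)
    {U : Set X} (hUo : IsOpen U) (hUne : U.Nonempty) : ∃ m, g^[m] x ∈ U := by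
  obtain ⟨_, ⟨m, rfl⟩, hm⟩ := hx.exists_mem_open hUo hUne
  exact ⟨m, hm⟩

theorem TransPtAut.surjective [TopologicalSpace X] [CompactSpace X] [T2Space X] {g : X → X}
    (hg : Continuous g) (hx : TransPtAut g x) (hiso : ¬ IsOpen {x}) : Surjective g := by
  have hWo : IsOpen (range g)ᶜ := (isCompact_range hg).isClosed.isOpen_compl
  -- the orbit of `x` meets `(range g)ᶜ` at most in `x` itself
  have hWx : (range g)ᶜ ⊆ {x} := by
    refine sdiff_eq_empty.mp (not_nonempty_iff_eq_empty.mp fun hne => ?_)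
    obtain ⟨m, hmW, hmx⟩ := hx.exists_iterate_mem (hWo.sdiff isClosed_singleton) hne
    cases m with
    | zero => exact hmx rfl
    | succ m => exact hmW ⟨_, (iterate_succ_apply' g m x).symm⟩
  rcases subset_singleton_iff_eq.mp hWx with hW | hW
  · exact range_eq_univ.mp (compl_empty_iff.mp hW)
  · exact absurd (hW ▸ hWo) hiso

theorem ThickSensitive.multiSensitive [UniformSpace X] (hf : ∀ n, Continuous (f n))
    (hper : PeriodicFam f p) (hx : TransPtAut (traj f p) x) (hthick : ThickSensitive f) :
    MultiSensitive f := by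
  obtain ⟨D, hD, hT⟩ := hthick
  refine ⟨D, hD, fun k U hUo hUne => ?_⟩
  choose m hm using fun i => hx.exists_iterate_mem (hUo i) (hUne i)
  have hWo : IsOpen (⋂ i, (traj f p)^[m i] ⁻¹' U i) :=
    isOpen_iInter_of_finite fun i => (hUo i).preimage ((continuous_traj hf p).iterate _)
  obtain ⟨n, hn⟩ := hT _ hWo ⟨x, mem_iInter.mpr hm⟩ (Finset.univ.sup m * p)
  have hn0 : 0 < n := by simpa using (hn 0 (Nat.zero_le _)).1
  refine ⟨n, mem_iInter.mpr fun i => hper.mem_NSet_of_add_mul_mem (a := m i) hn0 ?_⟩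
  exact NSet_mono (iInter_subset _ i)
    (hn _ (Nat.mul_le_mul_right p (Finset.le_sup (Finset.mem_univ i))))

theorem MultiSensitive.thickSensitive [UniformSpace X] [CompactSpace X] [T2Space X]
    (hf : ∀ n, Continuous (f n)) (hp : 0 < p) (hper : PeriodicFam f p)
    (hx : TransPtAut (traj f p) x) (hmulti : MultiSensitive f) : ThickSensitive f := by
  have hsurj := hx.surjective (continuous_traj hf p) (hmulti.sensitive.not_isOpen_singleton x)
  obtain ⟨D, hD, hM⟩ := hmulti
  obtain ⟨D', hD', hD'D⟩ := (hper.eventually_uniformity_traj_shift hf hp hD).exists_mem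
  refine ⟨D', hD', fun U hUo hUne k => ?_⟩
  obtain ⟨n, hkn, hn⟩ := exists_lt_mem_iInter_NSet hf hD hM (k * p)
    (fun i : Fin (k + 1) => (traj f p)^[i] ⁻¹' U)
    (fun i => hUo.preimage ((continuous_traj hf p).iterate i))
    (fun i => hUne.preimage (hsurj.iterate i))
  have hk : k ≤ k * p := Nat.le_mul_of_pos_right k hp
  refine ⟨n - k * p, fun j hj => hper.mem_NSet_of_mem_NSet_iterate_preimage
    (t := n - k * p + j) (n := n) hp hD'D (by omega) (by omega) ?_⟩
  have hi : (n - (n - k * p + j)) / p < k + 1 := by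
    calc (n - (n - k * p + j)) / p ≤ k * p / p := Nat.div_le_div_right (by omega)
      _ = k := Nat.mul_div_cancel k hp
      _ < k + 1 := k.lt_succ_self
  exact mem_iInter.mp hn ⟨_, hi⟩

end Sensitivity

theorem thickSensitive_iff_multiSensitive {X : Type*} [UniformSpace X] [CompactSpace X]
    [T2Space X]
    (f : ℕ → X → X) (hf : ∀ n, Continuous (f n))
    (p : ℕ) (hp : 0 < p) (hper : PeriodicFam f p)
    (htrans : ∃ x, TransPtAut (traj f p) x) :
    ThickSensitive f ↔ MultiSensitive f := by
  obtain ⟨x, hx⟩ := htrans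
  exact ⟨ThickSensitive.multiSensitive hf hper hx, MultiSensitive.thickSensitive hf hp hper hx⟩
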